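/- arXiv:1707.05944 — 7 statements merged into one kernel-verified Lean document; each statement's English description precedes it below -/
import Mathlib

section
/- Let q be a prime power and let m, n, k, r, δ be positive integers. Let C ⊆ (F_{q^m})^n be a code (not necessarily linear) of cardinality (q^m)^k that has (r,δ) rank-locality. Then its minimum rank distance satisfies d_R(C) ≤ n − k + 1 − (⌈k/r⌉ − 1)(δ − 1). -/
/-!
Grow a set `T` of coordinates greedily by adding repair groups, keeping `|C|_T| ≤ Q ^ e` with
`Q = q ^ m`. Since `C|_Γ` has rank distance at least `δ`, codewords agreeing on all but `δ - 1`
coordinates of `Γ` agree on `Γ`. So a group bringing at most `δ - 1` new coordinates adds no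
information, and any other group adds at most `r` information symbols together with `δ - 1`
redundant coordinates. Stopping when `e` reaches `k - 1` yields `T` with
`|T| ≥ k - 1 + (⌈k/r⌉ - 1)(δ - 1)` and `|C|_T| < |C|`: two distinct codewords agree on `T`, and
their difference has rank at most `n - |T|`.
-/

/-- The rank over `Fq` of (the restriction to `S` of) a vector `c` with entries in the
extension field `F`: the `Fq`-dimension of the `Fq`-linear span of the coordinates of `c`
indexed by `S`. -/
noncomputable def rankOn (Fq : Type*) [Field Fq] {F : Type*} [Field F] [Algebra Fq F]
    {ι : Type*} (c : ι → F) (S : Set ι) : ℕ :=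
  Module.finrank Fq (Submodule.span Fq (c '' S))

open Finset

section Puncture

variable {ι F : Type*}

def puncture (C : Set (ι → F)) (S : Set ι) : Set (S → F) :=
  S.domRestrict '' C

variable (C : Set (ι → F))

theorem card_puncture_le_card_image_of_eqOn {γ : Type*} [Finite γ] {S : Set ι}
    (g : (ι → F) → γ) (h : ∀ c ∈ C, ∀ c' ∈ C, g c = g c' → Set.EqOn c c' S) :
    Nat.card (puncture C S) ≤ Nat.card (g '' C) := by
  refine Nat.card_le_card_of_injective
    (fun y => ⟨g y.2.choose, y.2.choose, y.2.choose_spec.1, rfl⟩) fun y y' hyy' => ?_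
  obtain ⟨hc, hcy⟩ := y.2.choose_spec
  obtain ⟨hc', hcy'⟩ := y'.2.choose_spec
  refine Subtype.ext (hcy.symm.trans (Eq.trans ?_ hcy'))
  exact Set.domRestrict_eq_domRestrict_iff.2 (h _ hc _ hc' (congrArg Subtype.val hyy'))

theorem card_puncture_le_of_eqOn [Finite F] {S T : Set ι} [Finite S]
    (h : ∀ c ∈ C, ∀ c' ∈ C, Set.EqOn c c' S → Set.EqOn c c' T) :
    Nat.card (puncture C T) ≤ Nat.card (puncture C S) :=
  card_puncture_le_card_image_of_eqOn C S.domRestrict fun c hc c' hc' hcc =>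
    h c hc c' hc' (Set.domRestrict_eq_domRestrict_iff.1 hcc)

theorem card_puncture_union_le_mul [Finite F] (S T : Set ι) [Finite S] [Finite T] :
    Nat.card (puncture C (S ∪ T)) ≤ Nat.card (puncture C S) * Nat.card (puncture C T) := by
  calc Nat.card (puncture C (S ∪ T))
      ≤ Nat.card ((fun c => (S.domRestrict c, T.domRestrict c)) '' C) :=
        card_puncture_le_card_image_of_eqOn C _ fun c _ c' _ hcc => Set.eqOn_union.2
          ⟨Set.domRestrict_eq_domRestrict_iff.1 (congrArg Prod.fst hcc),
            Set.domRestrict_eq_domRestrict_iff.1 (congrArg Prod.snd hcc)⟩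
    _ ≤ Nat.card (puncture C S ×ˢ puncture C T) :=
        Nat.card_mono (Set.toFinite _) (by rintro _ ⟨c, hc, rfl⟩; exact ⟨⟨c, hc, rfl⟩, c, hc, rfl⟩)
    _ = Nat.card (puncture C S) * Nat.card (puncture C T) := by
        simp only [Nat.card_coe_set_eq, Set.ncard_prod]

theorem card_puncture_le_pow [Fintype F] (S : Finset ι) :
    Nat.card (puncture C S) ≤ Fintype.card F ^ #S :=
  calc Nat.card (puncture C S) ≤ Nat.card (S → F) := Finite.card_subtype_le _
    _ = Fintype.card F ^ #S := by simp [Nat.card_fun]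

theorem exists_card_puncture_le_mul_pow [DecidableEq ι] [Fintype F] {T U : Finset ι} (hTU : T ⊆ U)
    {j : ℕ} (hj : #T + j ≤ #U) : ∃ S, T ⊆ S ∧ S ⊆ U ∧ #S = #T + j ∧
      Nat.card (puncture C S) ≤ Nat.card (puncture C T) * Fintype.card F ^ j := by
  obtain ⟨S, hTS, hSU, hS⟩ := exists_subsuperset_card_eq hTU (Nat.le_add_right _ j) hj
  refine ⟨S, hTS, hSU, hS, ?_⟩
  have hsplit : (S : Set ι) = ↑T ∪ ↑(S \ T) := by rw [← coe_union, union_sdiff_of_subset hTS]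
  have hcard : #(S \ T) = j := by rw [card_sdiff_of_subset hTS, hS, Nat.add_sub_cancel_left]
  rw [hsplit]
  exact (card_puncture_union_le_mul C _ _).trans
    (Nat.mul_le_mul_left _ (hcard ▸ card_puncture_le_pow C _))

theorem exists_ne_eqOn_of_card_puncture_lt {S : Set ι} (h : Nat.card (puncture C S) < Nat.card C) :
    ∃ c ∈ C, ∃ c' ∈ C, c ≠ c' ∧ Set.EqOn c c' S := by
  by_contra! hne
  refine h.ne (Nat.card_image_of_injOn fun c hc c' hc' hcc => ?_)
  by_contra hcc'
  exact hne c hc c' hc' hcc' (Set.domRestrict_eq_domRestrict_iff.1 hcc)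

end Puncture

section RepairGroup

variable (Fq : Type*) {F ι : Type*} [Field Fq] [Field F] [Algebra Fq F]

theorem rankOn_sub_le_card_sdiff [DecidableEq ι] {c c' : ι → F} {S : Finset ι}
    (h : Set.EqOn c c' S) (Γ : Finset ι) : rankOn Fq (fun x => c x - c' x) Γ ≤ #(Γ \ S) := by
  classical
  set v := fun x => c x - c' x
  have hspan : Submodule.span Fq (v '' Γ) ≤ Submodule.span Fq ↑((Γ \ S).image v) := by
    refine Submodule.span_le.2 ?_
    rintro _ ⟨x, hx, rfl⟩
    by_cases hxS : x ∈ S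
    · simp [v, h hxS]
    · exact Submodule.subset_span (mem_coe.2 (mem_image_of_mem v (mem_sdiff.2 ⟨hx, hxS⟩)))
  calc rankOn Fq v Γ ≤ _ := Submodule.finrank_mono hspan
    _ ≤ #((Γ \ S).image v) := finrank_span_finset_le_card _
    _ ≤ #(Γ \ S) := card_image_le

/-- The punctured code `C|_Γ` has minimum rank distance at least `δ`. -/
def IsRepairGroup (C : Set (ι → F)) (δ : ℕ) (Γ : Finset ι) : Prop :=
  ∀ c ∈ C, ∀ c' ∈ C, (∃ x ∈ Γ, c x ≠ c' x) → δ ≤ rankOn Fq (fun x => c x - c' x) (Γ : Set ι)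

variable {Fq} [DecidableEq ι] {C : Set (ι → F)} {δ : ℕ} {Γ S : Finset ι}

theorem IsRepairGroup.eqOn_of_card_sdiff_lt (hΓ : IsRepairGroup Fq C δ Γ) {c c' : ι → F}
    (hc : c ∈ C) (hc' : c' ∈ C) (hS : #(Γ \ S) < δ) (h : Set.EqOn c c' S) :
    Set.EqOn c c' Γ := by
  by_contra hne
  simp only [Set.EqOn, not_forall] at hne
  obtain ⟨x, hx, hcx⟩ := hne
  exact (hS.trans_le (hΓ c hc c' hc' ⟨x, hx, hcx⟩)).not_ge (rankOn_sub_le_card_sdiff Fq h Γ)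

theorem IsRepairGroup.card_puncture_union_le [Finite F] (hΓ : IsRepairGroup Fq C δ Γ)
    (hS : #(Γ \ S) < δ) : Nat.card (puncture C ↑(S ∪ Γ)) ≤ Nat.card (puncture C S) :=
  card_puncture_le_of_eqOn C fun _ hc _ hc' h => by
    rw [coe_union]
    exact Set.eqOn_union.2 ⟨h, hΓ.eqOn_of_card_sdiff_lt hc hc' hS h⟩

end RepairGroup

theorem Int.ceil_natCast_div_le {a b c : ℕ} (h : a ≤ c * b) : ⌈(a : ℚ) / b⌉ ≤ c := by
  rw [Int.ceil_le]
  exact div_le_of_le_mul₀ (by positivity) (by positivity) (by exact_mod_cast h)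

theorem card_union_eq_card_add_card_sdiff {α : Type*} [DecidableEq α] (s t : Finset α) :
    #(s ∪ t) = #s + #(t \ s) := by
  rw [union_comm, ← card_sdiff_add_card, add_comm]

section Greedy

variable {F ι : Type*} [Fintype F] [DecidableEq ι] (C : Set (ι → F)) (r d k : ℕ)

/-- A stage of the greedy construction after `s` repair groups have been added: the coordinates
in `T` carry at most `e ≤ k` symbols of information about `C`, each group having contributed at
most `r` of them together with at least `d` redundant coordinates. -/
structure IsGreedyStage (T : Finset ι) (e s : ℕ) : Prop where
  card_puncture_le : Nat.card (puncture C T) ≤ Fintype.card F ^ e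
  le : e ≤ k
  add_mul_le_card : e + s * d ≤ #T
  le_mul : e ≤ s * r

variable {C r d k}

section Step

variable {T Γ : Finset ι} {e s : ℕ}

theorem IsGreedyStage.union_of_card_sdiff_le {Fq : Type*} [Field Fq] [Field F] [Algebra Fq F]
    (hT : IsGreedyStage C r d k T e s)
    (hΓ : IsRepairGroup Fq C (d + 1) Γ) (hA : #(Γ \ T) ≤ d) :
    IsGreedyStage C r d k (T ∪ Γ) e s where
  card_puncture_le := (hΓ.card_puncture_union_le (Nat.lt_succ_of_le hA)).trans hT.card_puncture_le
  le := hT.le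
  add_mul_le_card := hT.add_mul_le_card.trans (card_le_card subset_union_left)
  le_mul := hT.le_mul

/-- The new coordinates `Γ \ T` of a large group are split into `#(Γ \ T) - d` information
coordinates `S \ T` and `d` coordinates that `S` determines, since `d` is below the rank distance
of the group. -/
theorem IsGreedyStage.union_of_lt_card_sdiff {Fq : Type*} [Field Fq] [Field F] [Algebra Fq F]
    (hT : IsGreedyStage C r d k T e s)
    (hΓ : IsRepairGroup Fq C (d + 1) Γ) (hΓcard : #Γ ≤ r + d) (hA : d ≤ #(Γ \ T))
    (hk : e + (#(Γ \ T) - d) ≤ k) :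
    IsGreedyStage C r d k (T ∪ Γ) (e + (#(Γ \ T) - d)) (s + 1) := by
  have hcard := card_union_eq_card_add_card_sdiff T Γ
  obtain ⟨S, hTS, hSU, hS, hSC⟩ :=
    exists_card_puncture_le_mul_pow C (subset_union_left : T ⊆ T ∪ Γ) (j := #(Γ \ T) - d) (by omega)
  have hSΓ : S ∪ Γ = T ∪ Γ :=
    subset_antisymm (union_subset hSU subset_union_right) (union_subset_union_left hTS)
  have hΓS : #(Γ \ S) < d + 1 := by
    have := card_union_eq_card_add_card_sdiff S Γ
    rw [hSΓ] at this
    omega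
  have hsd : (s + 1) * d = s * d + d := add_one_mul s d
  have hsr : (s + 1) * r = s * r + r := add_one_mul s r
  have hΓT : #(Γ \ T) ≤ #Γ := card_le_card sdiff_subset
  refine ⟨?_, hk, ?_, ?_⟩
  · calc Nat.card (puncture C ↑(T ∪ Γ))
        = Nat.card (puncture C ↑(S ∪ Γ)) := by rw [hSΓ]
      _ ≤ Nat.card (puncture C S) := hΓ.card_puncture_union_le hΓS
      _ ≤ Fintype.card F ^ e * Fintype.card F ^ (#(Γ \ T) - d) :=
          hSC.trans (Nat.mul_le_mul_right _ hT.card_puncture_le)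
      _ = Fintype.card F ^ (e + (#(Γ \ T) - d)) := (pow_add _ _ _).symm
  · have := hT.add_mul_le_card
    omega
  · have := hT.le_mul
    omega

theorem IsGreedyStage.exists_card_puncture_le_of_lt (hT : IsGreedyStage C r d k T e s)
    (hΓcard : #Γ ≤ r + d) (hk : k < e + (#(Γ \ T) - d)) :
    ∃ (T' : Finset ι) (s' : ℕ), Nat.card (puncture C T') ≤ Fintype.card F ^ k ∧
      k + s' * d ≤ #T' ∧ k < (s' + 1) * r := by
  have hcard := card_union_eq_card_add_card_sdiff T Γ
  obtain ⟨S, -, -, hS, hSC⟩ :=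
    exists_card_puncture_le_mul_pow C (subset_union_left : T ⊆ T ∪ Γ) (j := k - e) (by omega)
  have hA : #(Γ \ T) ≤ #Γ := card_le_card sdiff_subset
  have hsr : (s + 1) * r = s * r + r := add_one_mul s r
  refine ⟨S, s, ?_, ?_, ?_⟩
  · calc Nat.card (puncture C S)
        ≤ Fintype.card F ^ e * Fintype.card F ^ (k - e) :=
          hSC.trans (Nat.mul_le_mul_right _ hT.card_puncture_le)
      _ = Fintype.card F ^ k := by rw [← pow_add, Nat.add_sub_cancel' hT.le]
  · have := hT.add_mul_le_card
    omega
  · have := hT.le_mul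
    omega

end Step

theorem IsGreedyStage.exists_card_puncture_le [Fintype ι]
    {Fq : Type*} [Field Fq] [Field F] [Algebra Fq F]
    (hloc : ∀ i, ∃ Γ : Finset ι, i ∈ Γ ∧ #Γ ≤ r + d ∧ IsRepairGroup Fq C (d + 1) Γ)
    (hC : Fintype.card F ^ k < Nat.card C) {T : Finset ι} {e s : ℕ}
    (hT : IsGreedyStage C r d k T e s) :
    ∃ (T' : Finset ι) (s' : ℕ), Nat.card (puncture C T') ≤ Fintype.card F ^ k ∧
      k + s' * d ≤ #T' ∧ k < (s' + 1) * r := by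
  obtain ⟨i, hi⟩ : ∃ i, i ∉ T := by
    by_contra! hall
    have hlt := hT.card_puncture_le.trans_lt
      ((pow_le_pow_right₀ Fintype.card_pos hT.le).trans_lt hC)
    obtain ⟨c, -, c', -, hne, hcc⟩ := exists_ne_eqOn_of_card_puncture_lt C hlt
    exact hne (funext fun x => hcc (hall x))
  obtain ⟨Γ, hiΓ, hΓcard, hΓ⟩ := hloc i
  have hTΓ : T ⊂ T ∪ Γ := Finset.ssubset_iff_subset_ne.2
    ⟨subset_union_left, fun h => hi (h ▸ mem_union_right T hiΓ)⟩
  rcases le_or_gt #(Γ \ T) d with hA | hA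
  · exact (hT.union_of_card_sdiff_le hΓ hA).exists_card_puncture_le hloc hC
  rcases le_or_gt (e + (#(Γ \ T) - d)) k with hk | hk
  · exact (hT.union_of_lt_card_sdiff hΓ hΓcard hA.le hk).exists_card_puncture_le hloc hC
  · exact hT.exists_card_puncture_le_of_lt hΓcard hk
termination_by #Tᶜ
decreasing_by all_goals exact card_lt_card (compl_ssubset_compl.2 hTΓ)

end Greedy

theorem rank_locality_singleton_bound_general
    (q m n k r δ : ℕ)
    (hk : 0 < k) (hδ : 0 < δ)
    (Fq F : Type*) [Field Fq] [Fintype Fq] [Field F] [Fintype F] [Algebra Fq F]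
    (hcardq : Fintype.card Fq = q) (hfrk : Module.finrank Fq F = m)
    (C : Set (Fin n → F)) (hC : Nat.card C = (q ^ m) ^ k)
    (hloc : ∀ i : Fin n, ∃ Γ : Finset (Fin n), i ∈ Γ ∧ Γ.card ≤ r + δ - 1 ∧
      ∀ c ∈ C, ∀ c' ∈ C, (∃ x ∈ Γ, c x ≠ c' x) →
        δ ≤ rankOn Fq (fun x => c x - c' x) (Γ : Set (Fin n))) :
    ∃ c ∈ C, ∃ c' ∈ C, c ≠ c' ∧
      (rankOn Fq (fun x => c x - c' x) Set.univ : ℤ)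
        ≤ (n : ℤ) - (k : ℤ) + 1 - ((⌈(k : ℚ) / (r : ℚ)⌉ : ℤ) - 1) * ((δ : ℤ) - 1) := by
  obtain ⟨d, rfl⟩ : ∃ d, δ = d + 1 := ⟨δ - 1, by omega⟩
  obtain ⟨j, rfl⟩ : ∃ j, k = j + 1 := ⟨k - 1, by omega⟩
  have hQ : Fintype.card F = q ^ m := by
    rw [Module.card_eq_pow_finrank (K := Fq), hcardq, hfrk]
  have hlt : Fintype.card F ^ j < Nat.card C := by
    rw [hC, ← hQ]
    exact pow_lt_pow_right₀ Fintype.one_lt_card j.lt_succ_self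
  have hstart : IsGreedyStage C r d j ∅ 0 0 :=
    ⟨(card_puncture_le_pow C ∅).trans_eq (by simp), j.zero_le, by simp, by simp⟩
  obtain ⟨T, s, hTC, hTcard, hjs⟩ :=
    hstart.exists_card_puncture_le
      (fun i => (hloc i).imp fun _ ⟨hi, hΓ, hrep⟩ => ⟨hi, by omega, hrep⟩) hlt
  obtain ⟨c, hc, c', hc', hne, hcc⟩ := exists_ne_eqOn_of_card_puncture_lt C (hTC.trans_lt hlt)
  refine ⟨c, hc, c', hc', hne, ?_⟩
  have hrank : rankOn Fq (fun x => c x - c' x) Set.univ ≤ n - #T := by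
    simpa [← Finset.compl_eq_univ_sdiff, card_compl] using rankOn_sub_le_card_sdiff Fq hcc univ
  have hTn : #T ≤ n := by simpa using card_le_univ T
  have hsd : (⌈((j + 1 : ℕ) : ℚ) / r⌉ - 1) * (d : ℤ) ≤ s * d := by
    have hceil := Int.ceil_natCast_div_le (a := j + 1) hjs
    exact mul_le_mul_of_nonneg_right (by omega) d.cast_nonneg
  have hTcard' : (j : ℤ) + s * d ≤ #T := by exact_mod_cast hTcard
  push_cast at hsd ⊢
  rw [add_sub_cancel_right]
  omega

/-- **Singleton-like bound for rank-locality.**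
Let `q` be a prime power and `m n k r δ` positive integers.  If a code
`C ⊆ (F_{q^m})^n` of cardinality `(q^m)^k` has `(r,δ)` rank-locality, then its minimum rank
distance is at most `n - k + 1 - (⌈k/r⌉ - 1)(δ - 1)`; equivalently, some pair of distinct
codewords is at rank distance at most this bound. -/
theorem rank_locality_singleton_bound
    (q m n k r δ : ℕ) (hq : IsPrimePow q)
    (hm : 0 < m) (hn : 0 < n) (hk : 0 < k) (hr : 0 < r) (hδ : 0 < δ)
    (Fq F : Type*) [Field Fq] [Fintype Fq] [Field F] [Fintype F] [Algebra Fq F]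
    (hcardq : Fintype.card Fq = q) (hfrk : Module.finrank Fq F = m)
    (C : Set (Fin n → F)) (hC : Nat.card C = (q ^ m) ^ k)
    (hloc : ∀ i : Fin n, ∃ Γ : Finset (Fin n), i ∈ Γ ∧ Γ.card ≤ r + δ - 1 ∧
      ∀ c ∈ C, ∀ c' ∈ C, (∃ x ∈ Γ, c x ≠ c' x) →
        δ ≤ rankOn Fq (fun x => c x - c' x) (Γ : Set (Fin n))) :
    ∃ c ∈ C, ∃ c' ∈ C, c ≠ c' ∧
      (rankOn Fq (fun x => c x - c' x) Set.univ : ℤ)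
        ≤ (n : ℤ) - (k : ℤ) + 1 - ((⌈(k : ℚ) / (r : ℚ)⌉ : ℤ) - 1) * ((δ : ℤ) - 1) :=
  rank_locality_singleton_bound_general q m n k r δ hk hδ Fq F hcardq hfrk C hC hloc
end

section
/- In Construction 1, for 0 ≤ i ≤ r−1 define G_i(x) = m_{i0} + Σ_{j'=1}^{k/r−1} m_{ij'} x^{q^{s j' + i} − q^i}. Then: (a) G_i is constant on each part: for every j ∈ {1,…,μ} and all γ, λ ∈ P_j, G_i(γ) = G_i(λ) for every 0 ≤ i ≤ r−1; and (b) for every j, every fixed γ ∈ P_j, and every λ ∈ P_j, the repair polynomial R_j(x) = Σ_{i=0}^{r−1} G_i(γ) x^{q^i} satisfies R_j(λ) = G_m(λ). Hence the local code C_j equals the set of evaluations of the repair polynomial R_j, a linearized polynomial of q-degree at most r−1, on the points of P_j. -/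
/-!
Every exponent in `G_i` has the form `Q^t e - e` with `Q = q^s = |F_{q^s}|` and `e = q^i`.
Since `x^{Q^t e} = x^e` on `F_{q^s}`, a nonzero `α_a` contributes the factor
`α_a^{Q^t e - e} = 1`, so `G_i(α_a β_j)` only depends on `β_j`; multiplying back by
`(α_b β_j)^e` then rebuilds `(α_b β_j)^{Q^t e}`, the corresponding monomial of `G_m`.
-/

/-- The evaluation point `α_a β_j ∈ P_j` of Construction 1, viewed inside `Km`. -/
noncomputable def evalPt {Ks Kn Km : Type*} [Field Ks] [Field Kn] [Field Km]
    [Algebra Ks Km] [Algebra Kn Km] {s μ : ℕ}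
    (α : Fin s → Ks) (β : Fin μ → Kn) (a : Fin s) (j : Fin μ) : Km :=
  algebraMap Ks Km (α a) * algebraMap Kn Km (β j)

namespace FiniteField

variable {K L : Type*} [Field K] [Fintype K] [Field L] [Algebra K L]

theorem pow_card_pow_mul (x : K) (t e : ℕ) : x ^ (Fintype.card K ^ t * e) = x ^ e := by
  rw [pow_mul, pow_card_pow]

theorem le_card_pow_mul (t e : ℕ) : e ≤ Fintype.card K ^ t * e :=
  Nat.le_mul_of_pos_left e (pow_pos Fintype.card_pos t)

theorem pow_card_pow_mul_sub_self {x : K} (hx : x ≠ 0) (t e : ℕ) :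
    x ^ (Fintype.card K ^ t * e - e) = 1 := by
  refine mul_right_cancel₀ (pow_ne_zero e hx) ?_
  rw [← pow_add, Nat.sub_add_cancel (le_card_pow_mul t e), pow_card_pow_mul, one_mul]

theorem algebraMap_mul_pow_card_pow_mul_sub_self {x : K} (hx : x ≠ 0) (y : L) (t e : ℕ) :
    (algebraMap K L x * y) ^ (Fintype.card K ^ t * e - e) =
      y ^ (Fintype.card K ^ t * e - e) := by
  rw [mul_pow, ← map_pow, pow_card_pow_mul_sub_self hx, map_one, one_mul]

theorem algebraMap_mul_pow_card_pow_mul_sub_mul {x : K} (hx : x ≠ 0) (x' : K) (y : L)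
    (t e : ℕ) :
    (algebraMap K L x * y) ^ (Fintype.card K ^ t * e - e) * (algebraMap K L x' * y) ^ e =
      (algebraMap K L x' * y) ^ (Fintype.card K ^ t * e) := by
  have hy : y ^ (Fintype.card K ^ t * e - e) * y ^ e = y ^ (Fintype.card K ^ t * e) := by
    rw [← pow_add, Nat.sub_add_cancel (le_card_pow_mul t e)]
  rw [algebraMap_mul_pow_card_pow_mul_sub_self hx, mul_pow, mul_pow (algebraMap K L x'),
    ← map_pow, ← map_pow, pow_card_pow_mul, ← hy]
  ring

end FiniteField

open FiniteField in
theorem Gi_constant_and_repair_polynomial_general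
    (q r s μ κ : ℕ)
    (Fq Ks Kn Km : Type*) [Field Fq] [Field Ks] [Field Kn] [Field Km]
    [Fintype Ks]
    [Algebra Fq Ks]
    [Algebra Ks Kn] [Algebra Ks Km] [Algebra Kn Km]
    (hcKs : Fintype.card Ks = q ^ s)
    (α : Module.Basis (Fin s) Fq Ks) (β : Module.Basis (Fin μ) Ks Kn)
    (M : Fin r → Fin κ → Km) (j : Fin μ) (a b : Fin s) :
    -- (a) each `G_i` takes the same value at `γ = α_a β_j` and `λ = α_b β_j`
    (∀ i : Fin r,
      (∑ j' : Fin κ, M i j' *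
          (evalPt α β a j) ^ (q ^ (s * (j' : ℕ) + (i : ℕ)) - q ^ (i : ℕ)))
        = ∑ j' : Fin κ, M i j' *
            (evalPt α β b j) ^ (q ^ (s * (j' : ℕ) + (i : ℕ)) - q ^ (i : ℕ))) ∧
    -- (b) the repair polynomial built from `γ = α_a β_j` agrees with the encoding
    -- polynomial at `λ = α_b β_j`
    (∑ i : Fin r,
        (∑ j' : Fin κ, M i j' *
            (evalPt α β a j) ^ (q ^ (s * (j' : ℕ) + (i : ℕ)) - q ^ (i : ℕ))) *
          (evalPt α β b j) ^ (q ^ (i : ℕ)))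
      = ∑ i : Fin r, ∑ j' : Fin κ, M i j' *
          (evalPt α β b j) ^ (q ^ (s * (j' : ℕ) + (i : ℕ))) := by
  have hexp (t i : ℕ) : q ^ (s * t + i) = Fintype.card Ks ^ t * q ^ i := by
    rw [hcKs, pow_add, pow_mul]
  simp only [hexp, evalPt]
  constructor
  · intro i
    refine Finset.sum_congr rfl fun j' _ => ?_
    rw [algebraMap_mul_pow_card_pow_mul_sub_self (α.ne_zero a),
      algebraMap_mul_pow_card_pow_mul_sub_self (α.ne_zero b)]
  · refine Finset.sum_congr rfl fun i _ => ?_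
    rw [Finset.sum_mul]
    refine Finset.sum_congr rfl fun j' _ => ?_
    rw [mul_assoc, algebraMap_mul_pow_card_pow_mul_sub_mul (α.ne_zero a)]

/-- **The polynomials `G_i` are constant on each part, and the repair polynomial agrees with
the encoding polynomial on each part.**  In Construction 1 (with `s = r + δ - 1`,
`κ = k / r`, `μ = n / s`), define `G_i(x) = Σ_{j'=0}^{κ-1} m_{ij'} x^{q^{s j' + i} - q^i}`
(the `j' = 0` term being `m_{i0}`).  Then (a) for all `γ, λ` in the same part `P_j` and all
`0 ≤ i ≤ r-1`, `G_i(γ) = G_i(λ)`; and (b) for any fixed `γ ∈ P_j` the repair polynomial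
`R_j(x) = Σ_{i=0}^{r-1} G_i(γ) x^{q^i}` satisfies `R_j(λ) = G_m(λ)` for every `λ ∈ P_j`,
where `G_m(x) = Σ_i Σ_{j'} m_{ij'} x^{q^{s j' + i}}`.  Hence the local code `C_j` equals the
set of evaluations on `P_j` of the linearized polynomial `R_j` of `q`-degree at most
`r - 1`. -/
theorem Gi_constant_and_repair_polynomial
    (q m n k r δ s μ κ : ℕ) (hq : IsPrimePow q)
    (hr : 0 < r) (hδ : 0 < δ) (hk : 0 < k) (hn : 0 < n) (hm : 0 < m)
    (hs : s = r + δ - 1) (hrk : k = r * κ) (hsn : n = s * μ) (hnm : n ∣ m)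
    (Fq Ks Kn Km : Type*) [Field Fq] [Field Ks] [Field Kn] [Field Km]
    [Fintype Fq] [Fintype Ks] [Fintype Kn] [Fintype Km]
    [Algebra Fq Ks] [Algebra Fq Kn] [Algebra Fq Km]
    [Algebra Ks Kn] [Algebra Ks Km] [Algebra Kn Km]
    [IsScalarTower Fq Ks Kn] [IsScalarTower Fq Ks Km] [IsScalarTower Fq Kn Km]
    [IsScalarTower Ks Kn Km]
    (hcFq : Fintype.card Fq = q) (hcKs : Fintype.card Ks = q ^ s)
    (hcKn : Fintype.card Kn = q ^ n) (hcKm : Fintype.card Km = q ^ m)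
    (α : Module.Basis (Fin s) Fq Ks) (β : Module.Basis (Fin μ) Ks Kn)
    (M : Fin r → Fin κ → Km) (j : Fin μ) (a b : Fin s) :
    -- (a) each `G_i` takes the same value at `γ = α_a β_j` and `λ = α_b β_j`
    (∀ i : Fin r,
      (∑ j' : Fin κ, M i j' *
          (evalPt α β a j) ^ (q ^ (s * (j' : ℕ) + (i : ℕ)) - q ^ (i : ℕ)))
        = ∑ j' : Fin κ, M i j' *
            (evalPt α β b j) ^ (q ^ (s * (j' : ℕ) + (i : ℕ)) - q ^ (i : ℕ))) ∧
    -- (b) the repair polynomial built from `γ = α_a β_j` agrees with the encoding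
    -- polynomial at `λ = α_b β_j`
    (∑ i : Fin r,
        (∑ j' : Fin κ, M i j' *
            (evalPt α β a j) ^ (q ^ (s * (j' : ℕ) + (i : ℕ)) - q ^ (i : ℕ))) *
          (evalPt α β b j) ^ (q ^ (i : ℕ)))
      = ∑ i : Fin r, ∑ j' : Fin κ, M i j' *
          (evalPt α β b j) ^ (q ^ (s * (j' : ℕ) + (i : ℕ))) :=
  Gi_constant_and_repair_polynomial_general q r s μ κ Fq Ks Kn Km hcKs α β M j a b
end

section
/- For every j ∈ {1,…,μ}, the local code C_j of Construction 1 is an F_{q^m}-linear code of length r+δ−1 and dimension r over F_{q^m} whose minimum rank distance equals δ; that is, each local code is a maximum rank distance (MRD) code of length r+δ−1 and dimension r. -/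
/-- The `j`-th local code `C_j` of Construction 1: evaluations of the encoding polynomials
`G_m(x) = Σ_{i<r} Σ_{j'<κ} m_{ij'} x^{q^{s j' + i}}` at the points of
`P_j = {α_a β_j : a < s}`. -/
noncomputable def localCode (Ks Kn Km : Type*) [Field Ks] [Field Kn] [Field Km]
    [Algebra Ks Km] [Algebra Kn Km] (q s r κ : ℕ) {μ : ℕ}
    (α : Fin s → Ks) (β : Fin μ → Kn) (j : Fin μ) : Set (Fin s → Km) :=
  {c | ∃ M : Fin r → Fin κ → Km, c = fun a =>
    ∑ i : Fin r, ∑ j' : Fin κ,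
      M i j' * (algebraMap Ks Km (α a) * algebraMap Kn Km (β j))
          ^ (q ^ (s * (j' : ℕ) + (i : ℕ)))}

/-- The rank over `Fq` of a vector with entries in `Km`. -/
noncomputable def rankVec (Fq : Type*) [Field Fq] {Km : Type*} [Field Km] [Algebra Fq Km]
    {ι : Type*} (c : ι → Km) : ℕ :=
  Module.finrank Fq (Submodule.span Fq (Set.range c))

/-!
Since `x ↦ x ^ q ^ s` fixes `F_{q^s}`, every codeword of `C_j` has the form `(L(α_a))_a` for a
`q`-linearized polynomial `L = Σ_{i<r} N_i x^{q^i}`, and conversely. Such an `L ≠ 0` is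
`F_q`-linear with at most `q^{r-1}` roots, so its kernel has dimension `≤ r - 1` and it maps the
`s`-dimensional `F_q`-span of the `α_a` onto a space of dimension `≥ s - (r - 1) = δ`. On the other hand,
the `r` coefficients `N_i` can be chosen, not all zero, so that `L` kills the `r - 1` points
`α_0, …, α_{r-2}`; the resulting codeword has rank exactly `δ`.
-/

open Module Submodule Polynomial

section LinearizedPoly

variable {L : Type*} [Field L] (q : ℕ) {r : ℕ}

noncomputable def linearizedPoly (N : Fin r → L) : L[X] :=
  ∑ i, C (N i) * X ^ q ^ (i : ℕ)

variable {q}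

lemma coeff_linearizedPoly_pow (hq : 1 < q) (N : Fin r → L) (i : Fin r) :
    (linearizedPoly q N).coeff (q ^ (i : ℕ)) = N i := by
  simp [linearizedPoly, coeff_X_pow, (Nat.pow_right_injective hq).eq_iff, Fin.val_inj]

lemma linearizedPoly_ne_zero (hq : 1 < q) {N : Fin r → L} (hN : N ≠ 0) :
    linearizedPoly q N ≠ 0 := by
  obtain ⟨i, hi⟩ := Function.ne_iff.mp hN
  exact fun h => hi (by rw [← coeff_linearizedPoly_pow hq N i, h, coeff_zero, Pi.zero_apply])

lemma natDegree_linearizedPoly_le (hq : 0 < q) (N : Fin r → L) :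
    (linearizedPoly q N).natDegree ≤ q ^ (r - 1) :=
  natDegree_sum_le_of_forall_le _ _ fun i _ => (natDegree_C_mul_X_pow_le _ _).trans
    (Nat.pow_le_pow_right hq (by omega))

end LinearizedPoly

section LinearizedMap

variable (K : Type*) {L : Type*} [Field K] [Fintype K] [Field L] [Algebra K L] {r : ℕ}

noncomputable def linearizedMap : (Fin r → L) →ₗ[L] L →ₗ[K] L :=
  Fintype.linearCombination L fun i => (FiniteField.frobeniusAlgHom K L ^ (i : ℕ)).toLinearMap

variable {K}

lemma linearizedMap_apply (N : Fin r → L) (x : L) :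
    linearizedMap K N x = ∑ i, N i * x ^ Fintype.card K ^ (i : ℕ) := by
  simp [linearizedMap, Fintype.linearCombination_apply, FiniteField.coe_frobeniusAlgHom,
    pow_iterate]

lemma eval_linearizedPoly_card (N : Fin r → L) (x : L) :
    (linearizedPoly (Fintype.card K) N).eval x = linearizedMap K N x := by
  simp [linearizedPoly, linearizedMap_apply, eval_finsetSum]

lemma finrank_ker_linearizedMap_le {N : Fin r → L} (hN : N ≠ 0) :
    finrank K (LinearMap.ker (linearizedMap K N)) ≤ r - 1 := by
  classical
  set P := linearizedPoly (Fintype.card K) N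
  have hP : P ≠ 0 := linearizedPoly_ne_zero Fintype.one_lt_card hN
  have hroots : ∀ x ∈ LinearMap.ker (linearizedMap K N), x ∈ P.roots := fun x hx => by
    rw [mem_roots hP, IsRoot, eval_linearizedPoly_card]
    exact hx
  have : Fintype (LinearMap.ker (linearizedMap K N)) :=
    (P.roots.finite_toSet.subset hroots).fintype
  have hcard : Fintype.card K ^ finrank K (LinearMap.ker (linearizedMap K N)) ≤
      Fintype.card K ^ (r - 1) := calc
    _ = Fintype.card (LinearMap.ker (linearizedMap K N)) := card_eq_pow_finrank.symm
    _ ≤ P.natDegree := by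
      refine (Set.toFinset_card (LinearMap.ker (linearizedMap K N) : Set L)).symm.trans_le ?_
      exact card_le_degree_of_subset_roots fun x hx => hroots x (by simpa using hx)
    _ ≤ _ := natDegree_linearizedPoly_le Fintype.card_pos N
  exact (Nat.pow_le_pow_iff_right Fintype.one_lt_card).mp hcard

end LinearizedMap

section RankOfImage

variable {K V W : Type*} [Field K] [AddCommGroup V] [Module K V] [AddCommGroup W] [Module K W]

lemma card_sub_finrank_ker_le_finrank_span_range_comp [FiniteDimensional K V] (f : V →ₗ[K] W)
    {ι : Type*} [Fintype ι] {A : ι → V} (hA : LinearIndependent K A) :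
    Fintype.card ι - finrank K (LinearMap.ker f) ≤ finrank K (span K (Set.range (f ∘ A))) := by
  set U := span K (Set.range A)
  have hU : finrank K U = Fintype.card ι := finrank_span_eq_card hA
  have hrange : LinearMap.range (f.domRestrict U) = span K (Set.range (f ∘ A)) := by
    rw [LinearMap.range_domRestrict, map_span, Set.range_comp]
  have hker : finrank K (LinearMap.ker (f.domRestrict U)) ≤ finrank K (LinearMap.ker f) := by
    rw [LinearMap.ker_domRestrict, ← finrank_map_subtype_eq, map_comap_subtype]
    exact finrank_mono inf_le_right
  have := (f.domRestrict U).finrank_range_add_finrank_ker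
  rw [hrange, hU] at this
  omega

lemma finrank_span_range_le_of_castAdd_eq_zero {t δ : ℕ} (v : Fin (t + δ) → W)
    (hv : ∀ b, v (Fin.castAdd δ b) = 0) : finrank K (span K (Set.range v)) ≤ δ := by
  have hsub : Set.range v ⊆ insert 0 (Set.range (v ∘ Fin.natAdd t)) := by
    rintro _ ⟨a, rfl⟩
    induction a using Fin.addCases with
    | left b => exact .inl (hv b)
    | right b => exact .inr ⟨b, rfl⟩
  have : FiniteDimensional K (span K (Set.range (v ∘ Fin.natAdd t))) :=
    FiniteDimensional.span_of_finite K (Set.finite_range _)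
  calc finrank K (span K (Set.range v))
      ≤ finrank K (span K (Set.range (v ∘ Fin.natAdd t))) := by
        have hspan := span_mono (R := K) hsub
        rw [span_insert_zero] at hspan
        exact finrank_mono hspan
    _ ≤ δ := (finrank_range_le_card (R := K) _).trans_eq (Fintype.card_fin δ)

end RankOfImage

section LinearizedEval

variable (K : Type*) {L : Type*} [Field K] [Fintype K] [Field L] [Algebra K L] {r : ℕ}

noncomputable def linearizedEval {ι : Type*} (x : ι → L) : (Fin r → L) →ₗ[L] ι → L :=
  LinearMap.pi fun a => LinearMap.applyₗ' L (x a) ∘ₗ linearizedMap K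

variable {K}

@[simp]
lemma linearizedEval_apply {ι : Type*} (x : ι → L) (N : Fin r → L) (a : ι) :
    linearizedEval K x N a = linearizedMap K N (x a) := rfl

lemma exists_ne_zero_linearizedEval_eq_zero {t : ℕ} (x : Fin t → L) :
    ∃ N : Fin (t + 1) → L, N ≠ 0 ∧ linearizedEval K x N = 0 := by
  have := (linearizedEval K x (r := t + 1)).ker_ne_bot_of_finrank_lt (by simp)
  simpa [Submodule.ne_bot_iff, and_comm] using this

variable [FiniteDimensional K L] {t δ : ℕ} {A : Fin (t + δ) → L}

lemma le_rankVec_linearizedEval (hA : LinearIndependent K A) {N : Fin (t + 1) → L} (hN : N ≠ 0) :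
    δ ≤ rankVec K (linearizedEval K A N) := by
  have hker := finrank_ker_linearizedMap_le (K := K) hN
  have := card_sub_finrank_ker_le_finrank_span_range_comp (linearizedMap K N) hA
  rw [Fintype.card_fin] at this
  exact (by omega : δ ≤ t + δ - finrank K (LinearMap.ker (linearizedMap K N))).trans this

lemma linearizedEval_injective (hδ : 0 < δ) (hA : LinearIndependent K A) :
    Function.Injective (linearizedEval K A (r := t + 1)) := by
  rw [← LinearMap.ker_eq_bot, LinearMap.ker_eq_bot']
  intro N hN
  by_contra hN0
  have := le_rankVec_linearizedEval hA hN0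
  have hzero : span K (Set.range (0 : Fin (t + δ) → L)) = ⊥ :=
    span_eq_bot.mpr (by rintro _ ⟨a, rfl⟩; rfl)
  rw [hN, rankVec, hzero, finrank_bot] at this
  omega

lemma exists_rankVec_linearizedEval_eq (hA : LinearIndependent K A) :
    ∃ N : Fin (t + 1) → L, N ≠ 0 ∧ rankVec K (linearizedEval K A N) = δ := by
  obtain ⟨N, hN, hvanish⟩ := exists_ne_zero_linearizedEval_eq_zero (K := K) (A ∘ Fin.castAdd δ)
  refine ⟨N, hN, le_antisymm ?_ (le_rankVec_linearizedEval hA hN)⟩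
  exact finrank_span_range_le_of_castAdd_eq_zero _ fun b => congrFun hvanish b

end LinearizedEval

lemma localCode_eq_range {Fq Ks Kn Km : Type*} [Field Fq] [Fintype Fq] [Field Ks] [Fintype Ks]
    [Field Kn] [Field Km] [Algebra Fq Km] [Algebra Ks Km] [Algebra Kn Km] {s r κ μ : ℕ}
    (hKs : Fintype.card Ks = Fintype.card Fq ^ s) (hκ : 0 < κ) (α : Fin s → Ks) (β : Fin μ → Kn)
    {j : Fin μ} (hβ : β j ≠ 0) :
    localCode Ks Kn Km (Fintype.card Fq) s r κ α β j =
      Set.range (linearizedEval Fq (r := r) fun a => algebraMap Ks Km (α a)) := by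
  have hb : algebraMap Kn Km (β j) ≠ 0 := (_root_.map_ne_zero _).mpr hβ
  -- the points `α a` lie in `F_{q^s}`, so `x ↦ x ^ q ^ s` fixes them
  have hpow (x : Ks) (y : Km) (i j' : ℕ) :
      (algebraMap Ks Km x * y) ^ Fintype.card Fq ^ (s * j' + i) =
        algebraMap Ks Km x ^ Fintype.card Fq ^ i * y ^ Fintype.card Fq ^ (s * j' + i) := by
    rw [mul_pow, pow_add, pow_mul, pow_mul, ← map_pow, ← hKs, FiniteField.pow_card_pow]
  ext c
  simp only [localCode, Set.mem_ofPred_eq, Set.mem_range, hpow]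
  constructor
  · rintro ⟨M, rfl⟩
    refine ⟨fun i => ∑ j', M i j' * algebraMap Kn Km (β j) ^ Fintype.card Fq ^ (s * (j' : ℕ) + i),
      funext fun a => ?_⟩
    simp only [linearizedEval_apply, linearizedMap_apply, Finset.sum_mul]
    exact Finset.sum_congr rfl fun i _ => Finset.sum_congr rfl fun j' _ => by ring
  · rintro ⟨N, rfl⟩
    refine ⟨fun i j' => if (j' : ℕ) = 0 then N i / algebraMap Kn Km (β j) ^ Fintype.card Fq ^ (i : ℕ)
      else 0, funext fun a => ?_⟩
    simp only [linearizedEval_apply, linearizedMap_apply]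
    refine Finset.sum_congr rfl fun i _ => ?_
    rw [Finset.sum_eq_single ⟨0, hκ⟩ (fun j' _ hj' => by simp [Fin.ext_iff.not.mp hj'])
      (by simp)]
    simp only [if_pos, mul_zero, zero_add]
    field_simp

theorem localCode_is_MRD_general
    (q k r δ s μ κ : ℕ)
    (hr : 0 < r) (hδ : 0 < δ) (hk : 0 < k)
    (hs : s = r + δ - 1) (hrk : k = r * κ)
    (Fq Ks Kn Km : Type*) [Field Fq] [Field Ks] [Field Kn] [Field Km]
    [Fintype Fq] [Fintype Ks] [Fintype Km]
    [Algebra Fq Ks] [Algebra Fq Km]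
    [Algebra Ks Kn] [Algebra Ks Km] [Algebra Kn Km]
    [IsScalarTower Fq Ks Km]
    (hcFq : Fintype.card Fq = q) (hcKs : Fintype.card Ks = q ^ s)
    (α : Module.Basis (Fin s) Fq Ks) (β : Module.Basis (Fin μ) Ks Kn)
    (j : Fin μ) :
    -- `C_j` is an `F_{q^m}`-linear code of length `s = r + δ - 1` and dimension `r`
    (∃ W : Submodule Km (Fin s → Km),
        (W : Set (Fin s → Km)) = localCode Ks Kn Km q s r κ α β j ∧
        Module.finrank Km W = r) ∧
    -- its minimum rank distance equals `δ`
    (∀ c ∈ localCode Ks Kn Km q s r κ α β j, ∀ c' ∈ localCode Ks Kn Km q s r κ α β j,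
        c ≠ c' → δ ≤ rankVec Fq (fun a => c a - c' a)) ∧
    (∃ c ∈ localCode Ks Kn Km q s r κ α β j, ∃ c' ∈ localCode Ks Kn Km q s r κ α β j,
        c ≠ c' ∧ rankVec Fq (fun a => c a - c' a) = δ) := by
  subst hcFq
  obtain ⟨t, rfl⟩ : ∃ t, r = t + 1 := ⟨r - 1, by omega⟩
  obtain rfl : s = t + δ := by omega
  have hκ : 0 < κ := Nat.pos_of_mul_pos_left (hrk ▸ hk)
  have hA : LinearIndependent Fq fun a => algebraMap Ks Km (α a) :=
    α.linearIndependent.map' (IsScalarTower.toAlgHom Fq Ks Km).toLinearMap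
      (LinearMap.ker_eq_bot.mpr (algebraMap Ks Km).injective)
  set G := linearizedEval Fq (r := t + 1) fun a => algebraMap Ks Km (α a)
  have hG : Function.Injective G := linearizedEval_injective hδ hA
  rw [localCode_eq_range hcKs hκ α β (β.ne_zero j)]
  refine ⟨⟨LinearMap.range G, LinearMap.coe_range G, ?_⟩, ?_, ?_⟩
  · rw [LinearMap.finrank_range_of_inj hG, finrank_fin_fun]
  · rintro _ ⟨N, rfl⟩ _ ⟨N', rfl⟩ hne
    rw [← Pi.sub_def, ← map_sub]
    exact le_rankVec_linearizedEval hA (sub_ne_zero.mpr (ne_of_apply_ne G hne))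
  · obtain ⟨N, hN, hrank⟩ := exists_rankVec_linearizedEval_eq hA
    refine ⟨G N, ⟨N, rfl⟩, 0, ⟨0, map_zero G⟩, ?_, by simpa using hrank⟩
    rwa [← map_zero G, hG.ne_iff]

/-- **The local codes of Construction 1 are MRD.**  For every `j ∈ {1,…,μ}`, the local code
`C_j` is an `F_{q^m}`-linear code of length `r + δ - 1` and dimension `r` over `F_{q^m}`
whose minimum rank distance equals `δ`; i.e., each local code is a maximum rank distance
code of length `r + δ - 1` and dimension `r`. -/
theorem localCode_is_MRD
    (q m n k r δ s μ κ : ℕ) (hq : IsPrimePow q)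
    (hr : 0 < r) (hδ : 0 < δ) (hk : 0 < k) (hn : 0 < n) (hm : 0 < m)
    (hs : s = r + δ - 1) (hrk : k = r * κ) (hsn : n = s * μ) (hnm : n ∣ m)
    (Fq Ks Kn Km : Type*) [Field Fq] [Field Ks] [Field Kn] [Field Km]
    [Fintype Fq] [Fintype Ks] [Fintype Kn] [Fintype Km]
    [Algebra Fq Ks] [Algebra Fq Kn] [Algebra Fq Km]
    [Algebra Ks Kn] [Algebra Ks Km] [Algebra Kn Km]
    [IsScalarTower Fq Ks Kn] [IsScalarTower Fq Ks Km] [IsScalarTower Fq Kn Km]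
    [IsScalarTower Ks Kn Km]
    (hcFq : Fintype.card Fq = q) (hcKs : Fintype.card Ks = q ^ s)
    (hcKn : Fintype.card Kn = q ^ n) (hcKm : Fintype.card Km = q ^ m)
    (α : Module.Basis (Fin s) Fq Ks) (β : Module.Basis (Fin μ) Ks Kn)
    (j : Fin μ) :
    -- `C_j` is an `F_{q^m}`-linear code of length `s = r + δ - 1` and dimension `r`
    (∃ W : Submodule Km (Fin s → Km),
        (W : Set (Fin s → Km)) = localCode Ks Kn Km q s r κ α β j ∧
        Module.finrank Km W = r) ∧
    -- its minimum rank distance equals `δ`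
    (∀ c ∈ localCode Ks Kn Km q s r κ α β j, ∀ c' ∈ localCode Ks Kn Km q s r κ α β j,
        c ≠ c' → δ ≤ rankVec Fq (fun a => c a - c' a)) ∧
    (∃ c ∈ localCode Ks Kn Km q s r κ α β j, ∃ c' ∈ localCode Ks Kn Km q s r κ α β j,
        c ≠ c' ∧ rankVec Fq (fun a => c a - c' a) = δ) :=
  localCode_is_MRD_general q k r δ s μ κ hr hδ hk hs hrk Fq Ks Kn Km hcFq hcKs α β j
end

section
/- Let C ⊆ F_q^{m×n} be a rank-metric code whose minimum rank distance is at least d, i.e., rank(C_1 − C_2) ≥ d for all distinct C_1, C_2 ∈ C. Let E ⊆ {1,…,m}×{1,…,n} be an erasure pattern with crisscross weight wt_cc(E) ≤ ρ, let Z_1, Z_2 ∈ F_q^{m×n} be error matrices with rank(Z_1) ≤ t and rank(Z_2) ≤ t, and suppose 2t + ρ ≤ d − 1. If C_1, C_2 ∈ C satisfy (C_1 + Z_1)_{ij} = (C_2 + Z_2)_{ij} for all (i,j) ∉ E, then C_1 = C_2. In other words, a rank-metric code of minimum rank distance d can correct any error pattern of rank at most t together with any erasure pattern of crisscross weight at most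 ρ whenever 2t + ρ ≤ d − 1. -/
lemma my_matrix_rank_add_le {m n : ℕ} {K : Type*} [Field K]
    (A B : Matrix (Fin m) (Fin n) K) : (A + B).rank ≤ A.rank + B.rank := by
  unfold Matrix.rank
  rw [Matrix.mulVecLin_add]
  have hle : LinearMap.range (A.mulVecLin + B.mulVecLin) ≤
      LinearMap.range A.mulVecLin ⊔ LinearMap.range B.mulVecLin := by
    rintro x ⟨v, rfl⟩
    exact Submodule.add_mem_sup (LinearMap.mem_range_self _ v) (LinearMap.mem_range_self _ v)
  refine le_trans (Submodule.finrank_mono hle) ?_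
  exact Submodule.finrank_add_le_finrank_add_finrank _ _

lemma my_matrix_rank_zero {m n : ℕ} {K : Type*} [Field K]
    (A : Matrix (Fin m) (Fin n) K) (h : A.rank = 0) : A = 0 := by
  have h2 : LinearMap.range A.mulVecLin = ⊥ := Submodule.finrank_eq_zero.mp h
  ext i j
  have := LinearMap.range_eq_bot.mp h2
  have h3 : A.mulVecLin (Pi.single j 1) = 0 := by rw [this]; rfl
  have := congrFun h3 i
  simpa [Matrix.mulVecLin, Matrix.mulVec_single_one] using this


/-- **Rank-metric codes correct crisscross erasures together with rank errors.**
Let `C ⊆ F_q^{m×n}` be a rank-metric code with minimum rank distance at least `d`.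
Let `E` be an erasure pattern of crisscross weight at most `ρ` (i.e. admitting a cover
`(X,Y)` with `|X| + |Y| ≤ ρ`), and let `Z₁, Z₂` be error matrices of rank at most `t`.
If `2t + ρ ≤ d - 1` and `C₁ + Z₁` agrees with `C₂ + Z₂` outside `E` for codewords
`C₁, C₂ ∈ C`, then `C₁ = C₂`. -/
theorem rank_metric_crisscross_correction
    (q m n d t ρ : ℕ) (hq : IsPrimePow q)
    (Fq : Type*) [Field Fq] [Fintype Fq] (hcard : Fintype.card Fq = q)
    (C : Set (Matrix (Fin m) (Fin n) Fq))
    (hdist : ∀ C₁ ∈ C, ∀ C₂ ∈ C, C₁ ≠ C₂ → d ≤ (C₁ - C₂).rank)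
    (E : Set (Fin m × Fin n))
    (hE : ∃ (X : Finset (Fin m)) (Y : Finset (Fin n)),
        (∀ p ∈ E, p.1 ∈ X ∨ p.2 ∈ Y) ∧ X.card + Y.card ≤ ρ)
    (Z₁ Z₂ : Matrix (Fin m) (Fin n) Fq)
    (hZ₁ : Z₁.rank ≤ t) (hZ₂ : Z₂.rank ≤ t)
    (hcond : 2 * t + ρ ≤ d - 1)
    (C₁ : Matrix (Fin m) (Fin n) Fq) (hC₁ : C₁ ∈ C)
    (C₂ : Matrix (Fin m) (Fin n) Fq) (hC₂ : C₂ ∈ C)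
    (hagree : ∀ p : Fin m × Fin n, p ∉ E → (C₁ + Z₁) p.1 p.2 = (C₂ + Z₂) p.1 p.2) :
    C₁ = C₂ := by
  classical
  obtain ⟨X, Y, hcov, hXY⟩ := hE
  by_contra hne
  have hd := hdist C₁ hC₁ C₂ hC₂ hne
  set D : Matrix (Fin m) (Fin n) Fq := C₁ - C₂ - (Z₂ - Z₁) with hDdef
  have hDsupp : ∀ i j, (⟨i, j⟩ : Fin m × Fin n) ∉ E → D i j = 0 := by
    intro i j h
    have h1 := hagree ⟨i, j⟩ h
    simp only [Matrix.add_apply] at h1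
    simp only [hDdef, Matrix.sub_apply]
    linear_combination h1
  set dX : Fin m → Fq := fun i => if i ∈ X then 1 else 0 with hdX
  set dY : Fin n → Fq := fun j => if j ∈ Y then 1 else 0 with hdY
  set A : Matrix (Fin m) (Fin n) Fq := Matrix.diagonal dX * D with hAdef
  set B : Matrix (Fin m) (Fin n) Fq := (D - A) * Matrix.diagonal dY with hBdef
  have hApply : ∀ i j, A i j = dX i * D i j := by
    intro i j; simp [hAdef, Matrix.diagonal_mul]
  have hBpply : ∀ i j, B i j = (D i j - A i j) * dY j := by
    intro i j; simp [hBdef, Matrix.mul_diagonal]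
  have hsplit : D = A + B := by
    ext i j
    by_cases hiX : i ∈ X
    · simp [Matrix.add_apply, hApply, hBpply, hdX, hiX]
    · by_cases hjY : j ∈ Y
      · simp [Matrix.add_apply, hApply, hBpply, hdX, hdY, hiX, hjY]
      · have hnotE : (⟨i, j⟩ : Fin m × Fin n) ∉ E := by
          intro hmem
          rcases hcov _ hmem with h | h
          exacts [hiX h, hjY h]
        simp [Matrix.add_apply, hApply, hBpply, hdX, hdY, hiX, hjY, hDsupp i j hnotE]
  have hrankA : A.rank ≤ X.card := by
    refine le_trans (Matrix.rank_mul_le_left _ _) (le_of_eq ?_)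
    rw [Matrix.rank_diagonal, Fintype.card_subtype]
    congr 1
    ext i
    simp [hdX]
  have hrankB : B.rank ≤ Y.card := by
    refine le_trans (Matrix.rank_mul_le_right _ _) (le_of_eq ?_)
    rw [Matrix.rank_diagonal, Fintype.card_subtype]
    congr 1
    ext j
    simp [hdY]
  have hneg : (-Z₁).rank ≤ t := by
    have : (-Z₁) = (-(1 : Matrix (Fin m) (Fin m) Fq)) * Z₁ := by
      rw [Matrix.neg_mul, Matrix.one_mul]
    rw [this]
    exact le_trans (Matrix.rank_mul_le_right _ _) hZ₁
  have hdecomp : C₁ - C₂ = A + B + Z₂ + (-Z₁) := by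
    rw [← hsplit, hDdef]; abel
  have hbound : (C₁ - C₂).rank ≤ X.card + Y.card + t + t := by
    rw [hdecomp]
    refine le_trans (my_matrix_rank_add_le _ _) ?_
    refine add_le_add ?_ hneg
    refine le_trans (my_matrix_rank_add_le _ _) ?_
    refine add_le_add ?_ hZ₂
    exact le_trans (my_matrix_rank_add_le _ _) (add_le_add hrankA hrankB)
  have hle : (C₁ - C₂).rank ≤ d - 1 := le_trans hbound (by omega)
  rcases Nat.eq_zero_or_pos d with hd0 | hd1
  · have : (C₁ - C₂).rank = 0 := by omega
    have := my_matrix_rank_zero _ this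
    exact hne (by rwa [sub_eq_zero] at this)
  · omega
end

section
/- For all matrices X, X' ∈ F_q^{m×n}, the subspace distance between their liftings satisfies d_S(Λ(X), Λ(X')) = 2·rank(X − X'). Consequently, for any rank-metric code C ⊆ F_q^{m×n} with at least two elements, the lifted code Λ(C) = {Λ(X) : X ∈ C} satisfies |Λ(C)| = |C| and its minimum subspace distance equals twice the minimum rank distance of C: d_S(Λ(C)) = 2 d_R(C). -/
/-- The subspace distance `d_S(U,V) = dim U + dim V - 2 dim (U ⊓ V)`. -/
noncomputable def subspaceDist {Fq V : Type*} [Field Fq] [AddCommGroup V] [Module Fq V]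
    (U W : Submodule Fq V) : ℕ :=
  Module.finrank Fq U + Module.finrank Fq W - 2 * Module.finrank Fq (U ⊓ W : Submodule Fq V)

/-- The lifting `Λ(X)` of a matrix `X ∈ F_q^{m×n}`: the column space of the
`(n+m) × n` matrix `[I; X]` (identity stacked on top of `X`), a subspace of
`F_q^{n+m}` (rows indexed by `Fin n ⊕ Fin m`). -/
noncomputable def lifting {Fq : Type*} [Field Fq] {m n : ℕ}
    (X : Matrix (Fin m) (Fin n) Fq) : Submodule Fq (Fin n ⊕ Fin m → Fq) :=
  Submodule.span Fq
    (Set.range (Matrix.fromRows (1 : Matrix (Fin n) (Fin n) Fq) X).transpose)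

section aux

variable {Fq : Type*} [Field Fq] {m n : ℕ}

open scoped Matrix

lemma lifting_eq_range (X : Matrix (Fin m) (Fin n) Fq) :
    lifting X = LinearMap.range (Matrix.fromRows (1 : Matrix (Fin n) (Fin n) Fq) X).mulVecLin :=
  (Matrix.range_mulVecLin _).symm

lemma mem_lifting {X : Matrix (Fin m) (Fin n) Fq} {v : Fin n ⊕ Fin m → Fq} :
    v ∈ lifting X ↔ ∃ c : Fin n → Fq, Sum.elim c (X *ᵥ c) = v := by
  rw [lifting_eq_range]
  constructor
  · rintro ⟨c, rfl⟩
    exact ⟨c, by simp [Matrix.mulVecLin_apply, Matrix.fromRows_mulVec, Matrix.one_mulVec]⟩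
  · rintro ⟨c, rfl⟩
    exact ⟨c, by simp [Matrix.mulVecLin_apply, Matrix.fromRows_mulVec, Matrix.one_mulVec]⟩

lemma lifting_inj_aux (X : Matrix (Fin m) (Fin n) Fq) :
    Function.Injective (Matrix.fromRows (1 : Matrix (Fin n) (Fin n) Fq) X).mulVecLin := by
  intro c c' h
  have := congrFun h
  simp only [Matrix.mulVecLin_apply, Matrix.fromRows_mulVec, Matrix.one_mulVec] at this
  funext j
  simpa using this (Sum.inl j)

lemma finrank_lifting (X : Matrix (Fin m) (Fin n) Fq) :
    Module.finrank Fq (lifting X) = n := by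
  rw [lifting_eq_range, LinearMap.finrank_range_of_inj (lifting_inj_aux X)]
  simp

lemma lifting_inf (X X' : Matrix (Fin m) (Fin n) Fq) :
    lifting X ⊓ lifting X' =
      Submodule.map (Matrix.fromRows (1 : Matrix (Fin n) (Fin n) Fq) X).mulVecLin
        (LinearMap.ker (X - X').mulVecLin) := by
  ext v
  simp only [Submodule.mem_inf, mem_lifting, Submodule.mem_map, LinearMap.mem_ker,
    Matrix.mulVecLin_apply]
  constructor
  · rintro ⟨⟨c, rfl⟩, ⟨c', hc'⟩⟩
    have h1 : c' = c := by
      funext j; simpa using congrFun hc' (Sum.inl j)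
    rw [h1] at hc'
    have h2 : X' *ᵥ c = X *ᵥ c := by
      funext i; simpa using congrFun hc' (Sum.inr i)
    refine ⟨c, ?_, ?_⟩
    · rw [Matrix.sub_mulVec, h2, sub_self]
    · simp [Matrix.fromRows_mulVec, Matrix.one_mulVec]
  · rintro ⟨c, hker, rfl⟩
    have h2 : X *ᵥ c = X' *ᵥ c := by
      have hs : X *ᵥ c - X' *ᵥ c = 0 := by rw [← Matrix.sub_mulVec]; exact hker
      exact sub_eq_zero.mp hs
    constructor
    · exact ⟨c, by simp [Matrix.fromRows_mulVec, Matrix.one_mulVec]⟩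
    · exact ⟨c, by simp [Matrix.fromRows_mulVec, Matrix.one_mulVec, h2]⟩

lemma finrank_lifting_inf (X X' : Matrix (Fin m) (Fin n) Fq) :
    Module.finrank Fq (lifting X ⊓ lifting X' : Submodule Fq (Fin n ⊕ Fin m → Fq))
      = n - (X - X').rank := by
  rw [lifting_inf]
  rw [← LinearEquiv.finrank_eq (Submodule.equivMapOfInjective _ (lifting_inj_aux X)
    (LinearMap.ker (X - X').mulVecLin))]
  have h := LinearMap.finrank_range_add_finrank_ker (X - X').mulVecLin
  have hdom : Module.finrank Fq (Fin n → Fq) = n := by simp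
  rw [hdom] at h
  have : (X - X').rank = Module.finrank Fq (LinearMap.range (X - X').mulVecLin) := rfl
  omega

lemma dist_lifting (X X' : Matrix (Fin m) (Fin n) Fq) :
    subspaceDist (lifting X) (lifting X') = 2 * (X - X').rank := by
  unfold subspaceDist
  rw [finrank_lifting, finrank_lifting, finrank_lifting_inf]
  have := (X - X').rank_le_width
  omega

lemma lifting_injective :
    Function.Injective (lifting : Matrix (Fin m) (Fin n) Fq → _) := by
  intro X X' h
  have hd : subspaceDist (lifting X) (lifting X') = 0 := by
    unfold subspaceDist
    rw [h, inf_idem, finrank_lifting]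
    omega
  rw [dist_lifting] at hd
  have hr : (X - X').rank = 0 := by omega
  have hk : Module.finrank Fq (LinearMap.range (X - X').mulVecLin) = 0 := hr
  rw [Submodule.finrank_eq_zero] at hk
  have h0 : (X - X').mulVecLin = 0 := LinearMap.range_eq_bot.mp hk
  have hz : X - X' = 0 := by
    ext i j
    have := congrFun (congrFun (congrArg DFunLike.coe h0) (Pi.single j 1)) i
    simpa [Matrix.mulVecLin_apply, Matrix.mulVec_single] using this
  exact sub_eq_zero.mp hz

end aux

/-- **Lifting doubles the rank distance.**  For all `X, X' ∈ F_q^{m×n}`,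
`d_S(Λ(X), Λ(X')) = 2 rank(X - X')`; consequently, for any rank-metric code `C` with at
least two elements, `|Λ(C)| = |C|` and the minimum subspace distance of `Λ(C)` equals
twice the minimum rank distance of `C`. -/
theorem lifting_subspace_distance
    (q m n : ℕ) (hq : IsPrimePow q)
    (Fq : Type*) [Field Fq] [Fintype Fq] (hcard : Fintype.card Fq = q) :
    (∀ X X' : Matrix (Fin m) (Fin n) Fq,
        subspaceDist (lifting X) (lifting X') = 2 * (X - X').rank) ∧
    (∀ C : Set (Matrix (Fin m) (Fin n) Fq), C.Nontrivial →
        Nat.card (lifting '' C) = Nat.card C ∧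
        sInf {e : ℕ | ∃ U ∈ lifting '' C, ∃ V ∈ lifting '' C, U ≠ V ∧ e = subspaceDist U V}
          = 2 * sInf {e : ℕ | ∃ X ∈ C, ∃ X' ∈ C, X ≠ X' ∧ e = (X - X').rank}) := by
  refine ⟨fun X X' => dist_lifting X X', fun C hC => ⟨?_, ?_⟩⟩
  · exact Nat.card_image_of_injective lifting_injective C
  · set S : Set ℕ := {e : ℕ | ∃ X ∈ C, ∃ X' ∈ C, X ≠ X' ∧ e = (X - X').rank} with hS
    have hTS : {e : ℕ | ∃ U ∈ lifting '' C, ∃ V ∈ lifting '' C, U ≠ V ∧ e = subspaceDist U V}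
        = (fun r => 2 * r) '' S := by
      ext e
      constructor
      · rintro ⟨U, ⟨X, hX, rfl⟩, V, ⟨X', hX', rfl⟩, hne, rfl⟩
        exact ⟨(X - X').rank, ⟨X, hX, X', hX', fun h => hne (by rw [h]), rfl⟩,
          (dist_lifting X X').symm⟩
      · rintro ⟨r, ⟨X, hX, X', hX', hne, rfl⟩, rfl⟩
        exact ⟨lifting X, ⟨X, hX, rfl⟩, lifting X', ⟨X', hX', rfl⟩,
          fun h => hne (lifting_injective h), (dist_lifting X X').symm⟩
    rw [hTS]
    obtain ⟨X, hX, X', hX', hne⟩ := hC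
    have hSne : S.Nonempty := ⟨(X - X').rank, X, hX, X', hX', hne, rfl⟩
    refine le_antisymm (Nat.sInf_le ⟨sInf S, Nat.sInf_mem hSne, rfl⟩) ?_
    refine le_csInf (hSne.image _) ?_
    rintro e ⟨r, hr, rfl⟩
    exact Nat.mul_le_mul_left 2 (Nat.sInf_le hr)
end

section
/- Let C ⊆ F_q^{m×n} be a rank-metric code with (r,δ) rank-locality witnessed by sets Γ(i) ⊆ {1,…,n}. For S ⊆ {1,…,n}, let Î_S denote the n×|S| submatrix of the n×n identity matrix formed by the columns indexed by S, and for X ∈ F_q^{m×n} let X_S denote the m×|S| submatrix of X formed by the columns indexed by S. Then for every i ∈ {1,…,n} with S = Γ(i) and all X, X' ∈ C, the subspaces V = column span of [Î_S; X_S] and V' = column span of [Î_S; X'_S] in F_q^{n+m} each have dimension |S|, and d_S(V, V') = 2 rank(X'_S − X_S); in particular, d_S(V, V') ≥ 2δ whenever X_S ≠ X'_S. Hence the lifted code Λ(C) has (r, 2δ) subspace-locality. -/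
/-- The submatrix `X_S` of `X ∈ F_q^{m×n}` formed by the columns indexed by `S`. -/
def colSub {Fq : Type*} {m n : ℕ} (X : Matrix (Fin m) (Fin n) Fq) (S : Finset (Fin n)) :
    Matrix (Fin m) {j // j ∈ S} Fq :=
  X.submatrix id (fun j : {j // j ∈ S} => (j : Fin n))

/-- The column span of `[Î_S; X_S]`, i.e. the restriction of the lifting `Λ(X)` to the
columns indexed by `S`: `Î_S` is the `n × |S|` submatrix of the identity matrix and `X_S`
the `m × |S|` submatrix of `X`, both formed by the columns indexed by `S`. -/
noncomputable def liftingRes {Fq : Type*} [Field Fq] {m n : ℕ}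
    (X : Matrix (Fin m) (Fin n) Fq) (S : Finset (Fin n)) :
    Submodule Fq (Fin n ⊕ Fin m → Fq) :=
  Submodule.span Fq
    (Set.range
      (((Matrix.fromRows (1 : Matrix (Fin n) (Fin n) Fq) X).submatrix id
        (fun j : {j // j ∈ S} => (j : Fin n))).transpose))

section Aux

variable {Fq : Type*} [Field Fq] {m n : ℕ}

/-- The matrix `[Î_S; X_S]`. -/
def liftMat (X : Matrix (Fin m) (Fin n) Fq) (S : Finset (Fin n)) :
    Matrix (Fin n ⊕ Fin m) {j // j ∈ S} Fq :=
  (Matrix.fromRows (1 : Matrix (Fin n) (Fin n) Fq) X).submatrix id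
    (fun j : {j // j ∈ S} => (j : Fin n))

lemma liftingRes_eq_range (X : Matrix (Fin m) (Fin n) Fq) (S : Finset (Fin n)) :
    liftingRes X S = LinearMap.range (liftMat X S).mulVecLin := by
  rw [Matrix.range_mulVecLin]; rfl

lemma liftM_mulVec_inl (X : Matrix (Fin m) (Fin n) Fq) (S : Finset (Fin n))
    (c : {j // j ∈ S} → Fq) (j : {j // j ∈ S}) :
    (liftMat X S).mulVec c (Sum.inl (j : Fin n)) = c j := by
  simp only [liftMat, Matrix.mulVec, dotProduct, Matrix.submatrix_apply, id,
    Matrix.fromRows_apply_inl, Matrix.one_apply]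
  rw [Finset.sum_eq_single j]
  · simp
  · intro b _ hb
    rw [if_neg, zero_mul]
    exact fun h => hb (Subtype.ext h.symm)
  · simp

lemma liftM_mulVec_inr (X : Matrix (Fin m) (Fin n) Fq) (S : Finset (Fin n))
    (c : {j // j ∈ S} → Fq) (a : Fin m) :
    (liftMat X S).mulVec c (Sum.inr a) = (colSub X S).mulVec c a := by
  simp only [liftMat, colSub, Matrix.mulVec, dotProduct, Matrix.submatrix_apply, id,
    Matrix.fromRows_apply_inr]

lemma liftM_inj (X : Matrix (Fin m) (Fin n) Fq) (S : Finset (Fin n)) :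
    Function.Injective (liftMat X S).mulVecLin := by
  intro c c' h
  funext j
  have := congrFun h (Sum.inl (j : Fin n))
  simpa [Matrix.mulVecLin_apply, liftM_mulVec_inl] using this

lemma finrank_liftingRes (X : Matrix (Fin m) (Fin n) Fq) (S : Finset (Fin n)) :
    Module.finrank Fq (liftingRes X S) = S.card := by
  rw [liftingRes_eq_range, LinearMap.finrank_range_of_inj (liftM_inj X S),
    Module.finrank_pi]
  exact Fintype.card_coe S

lemma inter_eq (X X' : Matrix (Fin m) (Fin n) Fq) (S : Finset (Fin n)) :
    liftingRes X S ⊓ liftingRes X' S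
      = Submodule.map (liftMat X S).mulVecLin
          (LinearMap.ker (colSub X' S - colSub X S).mulVecLin) := by
  rw [liftingRes_eq_range, liftingRes_eq_range]
  ext v
  simp only [Submodule.mem_inf, LinearMap.mem_range, Submodule.mem_map, LinearMap.mem_ker]
  constructor
  · rintro ⟨⟨c, rfl⟩, ⟨c', hc'⟩⟩
    have hcc : c' = c := by
      funext j
      have := congrFun hc' (Sum.inl (j : Fin n))
      simpa [Matrix.mulVecLin_apply, liftM_mulVec_inl] using this
    subst hcc
    refine ⟨c', ?_, rfl⟩
    funext a
    have := congrFun hc' (Sum.inr a)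
    simp only [Matrix.mulVecLin_apply, liftM_mulVec_inr] at this
    simp only [Matrix.mulVecLin_apply, Matrix.sub_mulVec, Pi.sub_apply, Pi.zero_apply]
    rw [this]
    simp
  · rintro ⟨c, hker, rfl⟩
    refine ⟨⟨c, rfl⟩, ⟨c, ?_⟩⟩
    funext x
    cases x with
    | inl k =>
      simp only [Matrix.mulVecLin_apply, liftMat, Matrix.mulVec, dotProduct,
        Matrix.submatrix_apply, id, Matrix.fromRows_apply_inl]
    | inr a =>
      have := congrFun hker a
      simp only [Matrix.mulVecLin_apply, Matrix.sub_mulVec, Pi.sub_apply,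
        Pi.zero_apply, sub_eq_zero] at this
      simp only [Matrix.mulVecLin_apply, liftM_mulVec_inr]
      exact this

lemma finrank_inter (X X' : Matrix (Fin m) (Fin n) Fq) (S : Finset (Fin n)) :
    Module.finrank Fq (liftingRes X S ⊓ liftingRes X' S : Submodule Fq (Fin n ⊕ Fin m → Fq))
      = S.card - (colSub X' S - colSub X S).rank := by
  rw [inter_eq]
  set D := colSub X' S - colSub X S
  have hmap : Module.finrank Fq
      (Submodule.map (liftMat X S).mulVecLin (LinearMap.ker D.mulVecLin))
      = Module.finrank Fq (LinearMap.ker D.mulVecLin) :=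
    (LinearEquiv.finrank_eq
      (Submodule.equivMapOfInjective _ (liftM_inj X S) _)).symm
  rw [hmap]
  have hrn := LinearMap.finrank_range_add_finrank_ker D.mulVecLin
  have hdom : Module.finrank Fq ({j // j ∈ S} → Fq) = S.card := by
    rw [Module.finrank_pi]; exact Fintype.card_coe S
  rw [hdom] at hrn
  have hrk : Module.finrank Fq (LinearMap.range D.mulVecLin) = D.rank := rfl
  omega

end Aux

/-- **Lifting preserves locality.**  Let `C ⊆ F_q^{m×n}` be a rank-metric code with `(r,δ)`
rank-locality witnessed by sets `Γ(i)`.  Then for every `i`, with `S = Γ(i)` and all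
`X, X' ∈ C`, the subspaces `V = ⟨[Î_S; X_S]⟩` and `V' = ⟨[Î_S; X'_S]⟩` each have dimension
`|S|`, and `d_S(V, V') = 2 rank(X'_S - X_S)`; in particular `d_S(V,V') ≥ 2δ` whenever
`X_S ≠ X'_S`.  Hence the lifted code `Λ(C)` has `(r, 2δ)` subspace-locality. -/
theorem lifting_preserves_locality
    (q m n r δ : ℕ) (hq : IsPrimePow q)
    (Fq : Type*) [Field Fq] [Fintype Fq] (hcard : Fintype.card Fq = q)
    (C : Set (Matrix (Fin m) (Fin n) Fq))
    (Γ : Fin n → Finset (Fin n))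
    (hmem : ∀ i, i ∈ Γ i) (hsize : ∀ i, (Γ i).card ≤ r + δ - 1)
    (hloc : ∀ i, ∀ X ∈ C, ∀ X' ∈ C,
        colSub X (Γ i) ≠ colSub X' (Γ i) →
        δ ≤ (colSub X (Γ i) - colSub X' (Γ i)).rank) :
    (∀ i : Fin n, ∀ X ∈ C, ∀ X' ∈ C,
      Module.finrank Fq (liftingRes X (Γ i)) = (Γ i).card ∧
      Module.finrank Fq (liftingRes X' (Γ i)) = (Γ i).card ∧
      subspaceDist (liftingRes X (Γ i)) (liftingRes X' (Γ i))
        = 2 * (colSub X' (Γ i) - colSub X (Γ i)).rank ∧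
      (colSub X (Γ i) ≠ colSub X' (Γ i) →
        2 * δ ≤ subspaceDist (liftingRes X (Γ i)) (liftingRes X' (Γ i)))) ∧
    -- hence `Λ(C)` has `(r, 2δ)` subspace-locality: distinct restricted subspaces are at
    -- subspace distance at least `2δ`
    (∀ i : Fin n, ∀ X ∈ C, ∀ X' ∈ C,
      liftingRes X (Γ i) ≠ liftingRes X' (Γ i) →
        2 * δ ≤ subspaceDist (liftingRes X (Γ i)) (liftingRes X' (Γ i))) := by
  have key : ∀ i : Fin n, ∀ X ∈ C, ∀ X' ∈ C,
      Module.finrank Fq (liftingRes X (Γ i)) = (Γ i).card ∧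
      Module.finrank Fq (liftingRes X' (Γ i)) = (Γ i).card ∧
      subspaceDist (liftingRes X (Γ i)) (liftingRes X' (Γ i))
        = 2 * (colSub X' (Γ i) - colSub X (Γ i)).rank ∧
      (colSub X (Γ i) ≠ colSub X' (Γ i) →
        2 * δ ≤ subspaceDist (liftingRes X (Γ i)) (liftingRes X' (Γ i))) := by
    intro i X hX X' hX'
    have h1 := finrank_liftingRes X (Γ i)
    have h2 := finrank_liftingRes X' (Γ i)
    have h3 := finrank_inter X X' (Γ i)
    have hle : (colSub X' (Γ i) - colSub X (Γ i)).rank ≤ (Γ i).card := by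
      have := Matrix.rank_le_card_width (colSub X' (Γ i) - colSub X (Γ i))
      rwa [Fintype.card_coe] at this
    have hdist : subspaceDist (liftingRes X (Γ i)) (liftingRes X' (Γ i))
        = 2 * (colSub X' (Γ i) - colSub X (Γ i)).rank := by
      unfold subspaceDist
      rw [h1, h2, h3]
      omega
    refine ⟨h1, h2, hdist, ?_⟩
    intro hne
    have hδ := hloc i X' hX' X hX (Ne.symm hne)
    rw [hdist]
    omega
  refine ⟨key, ?_⟩
  intro i X hX X' hX' hne
  refine (key i X hX X' hX').2.2.2 ?_
  intro heq
  apply hne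
  unfold liftingRes
  have : (Matrix.fromRows (1 : Matrix (Fin n) (Fin n) Fq) X).submatrix id
        (fun j : {j // j ∈ Γ i} => (j : Fin n))
      = (Matrix.fromRows (1 : Matrix (Fin n) (Fin n) Fq) X').submatrix id
        (fun j : {j // j ∈ Γ i} => (j : Fin n)) := by
    ext x j
    cases x with
    | inl k => simp
    | inr a =>
      have := congrFun (congrFun heq a) j
      simpa [colSub] using this
  rw [this]
end

section
/- Let Ω be a set of (r+δ−1)-dimensional subspaces of F_q^M whose minimum subspace distance is at least 2δ. Let V ∈ Ω and let X ∈ F_q^{(r+δ−1)×M} be a matrix of rank r+δ−1 whose rows span V. Let A ∈ F_q^{N×(r+δ−1)} with rank(A) ≥ r+δ−1−ρ, let Z ∈ F_q^{ℓ×M} be a matrix with at most t nonzero rows, let B ∈ F_q^{N×ℓ}, and set Y = AX + BZ. If 2t + ρ ≤ δ − 1, then the minimum subspace distance decoder recovers V: for every V' ∈ Ω with V' ≠ V, d_S(row space of Y, V) < d_S(row space of Y, V'). -/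
open scoped Classical

/-- The row space of a matrix: the span of its rows. -/
noncomputable def rowSpace {Fq : Type*} [Field Fq] {a M : ℕ}
    (X : Matrix (Fin a) (Fin M) Fq) : Submodule Fq (Fin M → Fq) :=
  Submodule.span Fq (Set.range X)

/-! The subspace distance is a metric, so it suffices that `d_S(⟨Y⟩, V) ≤ 2t + ρ ≤ δ - 1` is less
than half the minimum distance `2δ`. The rows of `AX` span a subspace `S ≤ V` of dimension
`rank A ≥ dim V - ρ`, and each of `⟨Y⟩` and `S` lies in the sum of the other with `⟨Z⟩`, a space of
dimension at most `t`; this bounds both `dim ⟨Y⟩ - dim (⟨Y⟩ ⊓ V)` and `dim V - dim (⟨Y⟩ ⊓ V)`. -/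

section SubspaceDistance

variable {K V : Type*} [Field K] [AddCommGroup V] [Module K V]

open Module

lemma subspaceDist_comm (U W : Submodule K V) : subspaceDist U W = subspaceDist W U := by
  rw [subspaceDist, subspaceDist, add_comm, inf_comm]

variable [FiniteDimensional K V]

lemma finrank_le_finrank_inf_add_of_le_sup {P Q R : Submodule K V} (h : P ≤ Q ⊔ R) :
    finrank K P ≤ finrank K (P ⊓ Q : Submodule K V) + finrank K R := by
  have hsup : finrank K (P ⊔ Q : Submodule K V) ≤ finrank K Q + finrank K R :=
    (Submodule.finrank_mono (sup_le h le_sup_left)).trans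
      (Submodule.finrank_add_le_finrank_add_finrank Q R)
  have := Submodule.finrank_sup_add_finrank_inf_eq P Q
  omega

lemma finrank_inf_add_finrank_inf_le (U W X : Submodule K V) :
    finrank K (U ⊓ W : Submodule K V) + finrank K (W ⊓ X : Submodule K V)
      ≤ finrank K W + finrank K (U ⊓ X : Submodule K V) := by
  have hsup : finrank K ((U ⊓ W) ⊔ (W ⊓ X) : Submodule K V) ≤ finrank K W :=
    Submodule.finrank_mono (sup_le inf_le_right inf_le_left)
  have hinf : finrank K ((U ⊓ W) ⊓ (W ⊓ X) : Submodule K V) ≤ finrank K (U ⊓ X : Submodule K V) :=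
    Submodule.finrank_mono (le_inf (inf_le_left.trans inf_le_left) (inf_le_right.trans inf_le_right))
  have := Submodule.finrank_sup_add_finrank_inf_eq (U ⊓ W) (W ⊓ X)
  omega

lemma subspaceDist_triangle (U W X : Submodule K V) :
    subspaceDist U X ≤ subspaceDist U W + subspaceDist W X := by
  have := finrank_inf_add_finrank_inf_le U W X
  have := Submodule.finrank_mono (inf_le_left : U ⊓ W ≤ U)
  have := Submodule.finrank_mono (inf_le_right : U ⊓ W ≤ W)
  have := Submodule.finrank_mono (inf_le_left : W ⊓ X ≤ W)
  have := Submodule.finrank_mono (inf_le_right : W ⊓ X ≤ X)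
  unfold subspaceDist
  omega

lemma subspaceDist_lt_of_two_mul_lt {U W X : Submodule K V}
    (h : 2 * subspaceDist U W < subspaceDist W X) : subspaceDist U W < subspaceDist U X := by
  have := subspaceDist_triangle W U X
  rw [subspaceDist_comm W U] at this
  omega

lemma subspaceDist_le_of_le_sup {U W S E : Submodule K V} (hU : U ≤ S ⊔ E) (hS : S ≤ U ⊔ E)
    (hSW : S ≤ W) : subspaceDist U W ≤ 2 * finrank K E + (finrank K W - finrank K S) := by
  have hUW := finrank_le_finrank_inf_add_of_le_sup (hU.trans (sup_le_sup_right hSW E))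
  have hSU := finrank_le_finrank_inf_add_of_le_sup hS
  have := Submodule.finrank_mono (le_inf inf_le_right (inf_le_left.trans hSW) : S ⊓ U ≤ U ⊓ W)
  have := Submodule.finrank_mono (inf_le_right : U ⊓ W ≤ W)
  unfold subspaceDist
  omega

end SubspaceDistance

section RowSpace

variable {K : Type*} [Field K] {a b m : ℕ}

lemma rowSpace_eq_range_vecMulLinear (X : Matrix (Fin a) (Fin m) K) :
    rowSpace X = LinearMap.range X.vecMulLinear :=
  (range_vecMulLinear X).symm

lemma finrank_rowSpace (X : Matrix (Fin a) (Fin m) K) :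
    Module.finrank K (rowSpace X) = X.rank :=
  X.rank_eq_finrank_span_row.symm

lemma rowSpace_add_le (P Q : Matrix (Fin a) (Fin m) K) :
    rowSpace (P + Q) ≤ rowSpace P ⊔ rowSpace Q :=
  Submodule.span_le.2 <| by
    rintro - ⟨i, rfl⟩
    exact Submodule.add_mem_sup (Submodule.subset_span ⟨i, rfl⟩) (Submodule.subset_span ⟨i, rfl⟩)

lemma rowSpace_sub_le (P Q : Matrix (Fin a) (Fin m) K) :
    rowSpace (P - Q) ≤ rowSpace P ⊔ rowSpace Q :=
  Submodule.span_le.2 <| by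
    rintro - ⟨i, rfl⟩
    exact Submodule.sub_mem_sup (Submodule.subset_span ⟨i, rfl⟩) (Submodule.subset_span ⟨i, rfl⟩)

lemma rowSpace_mul (A : Matrix (Fin b) (Fin a) K) (X : Matrix (Fin a) (Fin m) K) :
    rowSpace (A * X) = (rowSpace A).map X.vecMulLinear := by
  rw [rowSpace_eq_range_vecMulLinear, rowSpace_eq_range_vecMulLinear, ← LinearMap.range_comp]
  congr 1
  exact LinearMap.ext fun v => by simp [Matrix.vecMul_vecMul]

lemma rowSpace_mul_le (A : Matrix (Fin b) (Fin a) K) (X : Matrix (Fin a) (Fin m) K) :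
    rowSpace (A * X) ≤ rowSpace X := by
  rw [rowSpace_mul, rowSpace_eq_range_vecMulLinear X]
  exact LinearMap.map_le_range

lemma vecMulLinear_injective_of_rank_eq {X : Matrix (Fin a) (Fin m) K} (hX : X.rank = a) :
    Function.Injective X.vecMulLinear := by
  rw [← LinearMap.ker_eq_bot, ← Submodule.finrank_eq_zero]
  have := X.vecMulLinear.finrank_range_add_finrank_ker
  rw [← rowSpace_eq_range_vecMulLinear, finrank_rowSpace, hX, Module.finrank_fin_fun] at this
  omega

lemma finrank_rowSpace_mul_of_rank_eq (A : Matrix (Fin b) (Fin a) K)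
    {X : Matrix (Fin a) (Fin m) K} (hX : X.rank = a) :
    Module.finrank K (rowSpace (A * X)) = A.rank := by
  rw [rowSpace_mul, ← finrank_rowSpace]
  exact (Submodule.equivMapOfInjective _ (vecMulLinear_injective_of_rank_eq hX) _).finrank_eq.symm

lemma finrank_rowSpace_le_card_ne_zero (Z : Matrix (Fin a) (Fin m) K) :
    Module.finrank K (rowSpace Z) ≤ (Finset.univ.filter (fun i : Fin a => Z i ≠ 0)).card := by
  rw [finrank_rowSpace]
  refine Z.rank_le_card_of_support_subset _ fun i hi => ?_
  simp only [Finset.coe_filter, Finset.mem_univ, true_and]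
  exact hi

end RowSpace

theorem min_subspace_distance_decoding_general
    (M N ℓ r δ t ρ : ℕ) (hδ : 0 < δ)
    (Fq : Type*) [Field Fq]
    (Ω : Set (Submodule Fq (Fin M → Fq)))
    (hdist : ∀ U ∈ Ω, ∀ W ∈ Ω, U ≠ W → 2 * δ ≤ subspaceDist U W)
    (V : Submodule Fq (Fin M → Fq)) (hV : V ∈ Ω)
    (X : Matrix (Fin (r + δ - 1)) (Fin M) Fq)
    (hXrank : X.rank = r + δ - 1) (hXspan : rowSpace X = V)
    (A : Matrix (Fin N) (Fin (r + δ - 1)) Fq) (hA : r + δ - 1 - ρ ≤ A.rank)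
    (Z : Matrix (Fin ℓ) (Fin M) Fq)
    (hZ : (Finset.univ.filter (fun i : Fin ℓ => Z i ≠ 0)).card ≤ t)
    (B : Matrix (Fin N) (Fin ℓ) Fq)
    (Y : Matrix (Fin N) (Fin M) Fq) (hY : Y = A * X + B * Z)
    (hcond : 2 * t + ρ ≤ δ - 1) :
    ∀ V' ∈ Ω, V' ≠ V →
      subspaceDist (rowSpace Y) V < subspaceDist (rowSpace Y) V' := by
  intro V' hV' hne
  have hYS : rowSpace Y ≤ rowSpace (A * X) ⊔ rowSpace Z :=
    hY ▸ (rowSpace_add_le _ _).trans (sup_le_sup_left (rowSpace_mul_le B Z) _)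
  have hSY : rowSpace (A * X) ≤ rowSpace Y ⊔ rowSpace Z := by
    rw [show A * X = Y - B * Z by rw [hY, add_sub_cancel_right]]
    exact (rowSpace_sub_le _ _).trans (sup_le_sup_left (rowSpace_mul_le B Z) _)
  have hSV : rowSpace (A * X) ≤ V := hXspan ▸ rowSpace_mul_le A X
  have hE : Module.finrank Fq (rowSpace Z) ≤ t := (finrank_rowSpace_le_card_ne_zero Z).trans hZ
  have hS : Module.finrank Fq (rowSpace (A * X)) = A.rank :=
    finrank_rowSpace_mul_of_rank_eq A hXrank
  have hV_dim : Module.finrank Fq V = r + δ - 1 := by rw [← hXspan, finrank_rowSpace, hXrank]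
  have hclose := subspaceDist_le_of_le_sup hYS hSY hSV
  have hfar := hdist V hV V' hV' hne.symm
  exact subspaceDist_lt_of_two_mul_lt (by omega)

/-- **Minimum subspace-distance decoding over a noisy network.**
Let `Ω` be a set of `(r+δ-1)`-dimensional subspaces of `F_q^M` with minimum subspace
distance at least `2δ`.  Let `V ∈ Ω`, let `X` be a full-rank `(r+δ-1) × M` matrix whose
rows span `V`, let `A` be an `N × (r+δ-1)` matrix with `rank A ≥ r+δ-1-ρ`, let `Z` be an
`ℓ × M` matrix with at most `t` nonzero rows, let `B` be an `N × ℓ` matrix, and set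
`Y = AX + BZ`.  If `2t + ρ ≤ δ - 1`, then the minimum subspace distance decoder recovers
`V`: for every `V' ∈ Ω` with `V' ≠ V`, `d_S(⟨Y⟩, V) < d_S(⟨Y⟩, V')`, where `⟨Y⟩` is the
row space of `Y`. -/
theorem min_subspace_distance_decoding
    (q M N ℓ r δ t ρ : ℕ) (hq : IsPrimePow q) (hr : 0 < r) (hδ : 0 < δ)
    (Fq : Type*) [Field Fq] [Fintype Fq] (hcard : Fintype.card Fq = q)
    (Ω : Set (Submodule Fq (Fin M → Fq)))
    (hdim : ∀ U ∈ Ω, Module.finrank Fq U = r + δ - 1)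
    (hdist : ∀ U ∈ Ω, ∀ W ∈ Ω, U ≠ W → 2 * δ ≤ subspaceDist U W)
    (V : Submodule Fq (Fin M → Fq)) (hV : V ∈ Ω)
    (X : Matrix (Fin (r + δ - 1)) (Fin M) Fq)
    (hXrank : X.rank = r + δ - 1) (hXspan : rowSpace X = V)
    (A : Matrix (Fin N) (Fin (r + δ - 1)) Fq) (hA : r + δ - 1 - ρ ≤ A.rank)
    (Z : Matrix (Fin ℓ) (Fin M) Fq)
    (hZ : (Finset.univ.filter (fun i : Fin ℓ => Z i ≠ 0)).card ≤ t)
    (B : Matrix (Fin N) (Fin ℓ) Fq)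
    (Y : Matrix (Fin N) (Fin M) Fq) (hY : Y = A * X + B * Z)
    (hcond : 2 * t + ρ ≤ δ - 1) :
    ∀ V' ∈ Ω, V' ≠ V →
      subspaceDist (rowSpace Y) V < subspaceDist (rowSpace Y) V' :=
  min_subspace_distance_decoding_general M N ℓ r δ t ρ hδ Fq Ω hdist V hV X hXrank hXspan A hA Z hZ
    B Y hY hcond
end
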